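/- arXiv:2502.04580 — 3 statements merged into one kernel-verified Lean document; each statement's English description precedes it below -/
import Mathlib

section
/- Suppose Y_{n+1} is conditionally independent of the demonstrations D_n given (X_{n+1}, e) for every n, and the pairs (X_i, Y_i) are exchangeable across positions given e. Then for u ≤ v, the reduction in Bayes risk equals a conditional mutual information: ε_Bayes^u − ε_Bayes^v = I(Y_{u+1}; D̃_{v−u} | X_{u+1}, D_u), where D̃_{v−u} is an independent copy of a fresh batch of v−u demonstrations drawn from the same conditional distribution given e. -/
open Finset

/-- Conditional mutual information `I(A ; C | B)` of a joint pmf `w` on `A × B × C`. -/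
noncomputable def condMI {A B C : Type*} [Fintype A] [Fintype B] [Fintype C]
    (w : A → B → C → ℝ) : ℝ :=
  ∑ a, ∑ b, ∑ c, w a b c *
    Real.log (w a b c * (∑ a', ∑ c', w a' b c') /
      ((∑ c', w a b c') * (∑ a', w a' b c)))

/-- Weight of a demonstration sequence `d = ((X₁,Y₁),…,(Xₙ,Yₙ))` given environment `e`,
with inputs i.i.d. from `μ` and outputs drawn from `k e x`. -/
noncomputable def demoW {E X Y : Type*} {n : ℕ}
    (μ : X → ℝ) (k : E → X → Y → ℝ) (e : E) (d : Fin n → X × Y) : ℝ :=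
  ∏ i, μ (d i).1 * k e (d i).1 (d i).2

/-- Bayes risk `ε_Bayes^t = I(Y_{t+1}; e | X_{t+1}, D_t)` in the hierarchical generative
model with prior `π` on environments. -/
noncomputable def epsBayes {E X Y : Type*} [Fintype E] [Fintype X] [Fintype Y]
    (π : E → ℝ) (μ : X → ℝ) (k : E → X → Y → ℝ) (t : ℕ) : ℝ :=
  condMI (fun (e : E) (bc : (Fin t → X × Y) × X) (y : Y) =>
    π e * demoW μ k e bc.1 * μ bc.2 * k e bc.2 y)

/-- `I(Y_{u+1}; D̃_n | X_{u+1}, D_u)` where `D̃_n` is an independent fresh batch of `n`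
demonstrations drawn from the same conditional distribution given `e`. -/
noncomputable def freshInfo {E X Y : Type*} [Fintype E] [Fintype X] [Fintype Y]
    (π : E → ℝ) (μ : X → ℝ) (k : E → X → Y → ℝ) (u n : ℕ) : ℝ :=
  condMI (fun (dt : Fin n → X × Y) (bc : (Fin u → X × Y) × X) (y : Y) =>
    ∑ e, π e * demoW μ k e bc.1 * μ bc.2 * k e bc.2 y * demoW μ k e dt)

/-- Conditional entropy `H(C | B)` of a joint weight `p` on `B × C`. -/
noncomputable def CE {B C : Type*} [Fintype B] [Fintype C] (p : B → C → ℝ) : ℝ :=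
  - ∑ b, ∑ c, p b c * Real.log (p b c / ∑ c', p b c')

lemma CE_reindex {B B' C : Type*} [Fintype B] [Fintype B'] [Fintype C]
    (e : B ≃ B') (p : B' → C → ℝ) :
    CE (fun b c => p (e b) c) = CE p := by
  unfold CE
  rw [← Equiv.sum_comp e (fun b' => ∑ c, p b' c * Real.log (p b' c / ∑ c', p b' c'))]

lemma condMI_eq {A B C : Type*} [Fintype A] [Fintype B] [Fintype C]
    [Nonempty A] [Nonempty C]
    (w : A → B → C → ℝ) (hw : ∀ a b c, 0 < w a b c) :
    condMI w = CE (fun b c => ∑ a, w a b c) - CE (fun ab : A × B => w ab.1 ab.2) := by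
  have hAB : ∀ a b, (0:ℝ) < ∑ c, w a b c := fun a b =>
    Finset.sum_pos (fun c _ => hw a b c) univ_nonempty
  have hBC : ∀ b c, (0:ℝ) < ∑ a, w a b c := fun b c =>
    Finset.sum_pos (fun a _ => hw a b c) univ_nonempty
  have hB : ∀ b, (0:ℝ) < ∑ a, ∑ c, w a b c := fun b =>
    Finset.sum_pos (fun a _ => hAB a b) univ_nonempty
  have key : ∀ a b c, w a b c *
      Real.log (w a b c * (∑ a', ∑ c', w a' b c') /
        ((∑ c', w a b c') * (∑ a', w a' b c)))
      = w a b c * Real.log (w a b c / ∑ c', w a b c')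
        - w a b c * Real.log ((∑ a', w a' b c) / (∑ a', ∑ c', w a' b c')) := by
    intro a b c
    rw [← mul_sub]
    congr 1
    have h1 : (0:ℝ) < w a b c * (∑ a', ∑ c', w a' b c') := mul_pos (hw a b c) (hB b)
    have h2 : (0:ℝ) < (∑ c', w a b c') * (∑ a', w a' b c) := mul_pos (hAB a b) (hBC b c)
    rw [Real.log_div h1.ne' h2.ne',
        Real.log_div (hw a b c).ne' (hAB a b).ne',
        Real.log_div (hBC b c).ne' (hB b).ne',
        Real.log_mul (hw a b c).ne' (hB b).ne',
        Real.log_mul (hAB a b).ne' (hBC b c).ne']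
    ring
  unfold condMI CE
  simp only [key, Finset.sum_sub_distrib]
  have h1 : (∑ a, ∑ b, ∑ c, w a b c * Real.log (w a b c / ∑ c', w a b c'))
      = ∑ ab : A × B, ∑ c, w ab.1 ab.2 c * Real.log (w ab.1 ab.2 c / ∑ c', w ab.1 ab.2 c') := by
    rw [Fintype.sum_prod_type]
  have h2 : (∑ a, ∑ b, ∑ c, w a b c * Real.log ((∑ a', w a' b c) / (∑ a', ∑ c', w a' b c')))
      = ∑ b, ∑ c, (∑ a, w a b c) * Real.log ((∑ a, w a b c) / ∑ c', ∑ a, w a b c') := by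
    rw [Finset.sum_comm]
    refine Finset.sum_congr rfl fun b _ => ?_
    rw [Finset.sum_comm]
    refine Finset.sum_congr rfl fun c _ => ?_
    rw [← Finset.sum_mul]
    congr 2
    rw [Finset.sum_comm (f := fun a c => w a b c)]
  rw [h1, h2]
  ring

lemma demoW_pos {E X Y : Type*} {n : ℕ} [Fintype X] [Fintype Y]
    {μ : X → ℝ} {k : E → X → Y → ℝ}
    (hμ : ∀ x, 0 < μ x) (hk : ∀ e x y, 0 < k e x y) (e : E) (d : Fin n → X × Y) :
    0 < demoW μ k e d :=
  Finset.prod_pos fun i _ => mul_pos (hμ _) (hk _ _ _)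

lemma demoW_sum_one {E X Y : Type*} [Fintype X] [Fintype Y]
    (μ : X → ℝ) (k : E → X → Y → ℝ)
    (hμsum : ∑ x, μ x = 1) (hksum : ∀ e x, ∑ y, k e x y = 1) (e : E) (n : ℕ) :
    ∑ d : Fin n → X × Y, demoW μ k e d = 1 := by
  unfold demoW
  have hps := Finset.prod_univ_sum (fun _ : Fin n => (univ : Finset (X × Y)))
    (fun _ p => μ p.1 * k e p.1 p.2)
  rw [Fintype.piFinset_univ] at hps
  rw [← hps]
  have h : ∑ p : X × Y, μ p.1 * k e p.1 p.2 = 1 := by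
    rw [Fintype.sum_prod_type]
    simp only [← Finset.mul_sum, hksum, mul_one, hμsum]
  simp [h]

/-- Joint weight of `((D_t, X), Y)` with `e` marginalized out. -/
noncomputable def pmarg {E X Y : Type*} [Fintype E] [Fintype X] [Fintype Y]
    (π : E → ℝ) (μ : X → ℝ) (k : E → X → Y → ℝ) (t : ℕ) :
    ((Fin t → X × Y) × X) → Y → ℝ :=
  fun bc y => ∑ e, π e * demoW μ k e bc.1 * μ bc.2 * k e bc.2 y

/-- `H(Y | X, e)`, which does not depend on `t`. -/
noncomputable def Hstar {E X Y : Type*} [Fintype E] [Fintype X] [Fintype Y]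
    (π : E → ℝ) (μ : X → ℝ) (k : E → X → Y → ℝ) : ℝ :=
  - ∑ e, ∑ x, ∑ y, π e * μ x * (k e x y * Real.log (k e x y))

lemma CEjoint_eq {E X Y : Type*} [Fintype E] [Fintype X] [Fintype Y]
    (π : E → ℝ) (μ : X → ℝ) (k : E → X → Y → ℝ)
    (hπ : ∀ e, 0 < π e) (hμ : ∀ x, 0 < μ x) (hk : ∀ e x y, 0 < k e x y)
    (hμsum : ∑ x, μ x = 1) (hksum : ∀ e x, ∑ y, k e x y = 1) (t : ℕ) :
    CE (fun ab : E × ((Fin t → X × Y) × X) => fun y =>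
        π ab.1 * demoW μ k ab.1 ab.2.1 * μ ab.2.2 * k ab.1 ab.2.2 y)
      = Hstar π μ k := by
  unfold CE Hstar
  congr 1
  rw [Fintype.sum_prod_type]
  refine Finset.sum_congr rfl fun e _ => ?_
  rw [Fintype.sum_prod_type]
  calc ∑ d : Fin t → X × Y, ∑ x, ∑ y,
        π e * demoW μ k e d * μ x * k e x y *
          Real.log (π e * demoW μ k e d * μ x * k e x y /
            ∑ y', π e * demoW μ k e d * μ x * k e x y')
      = ∑ d : Fin t → X × Y, demoW μ k e d *
          ∑ x, ∑ y, π e * μ x * (k e x y * Real.log (k e x y)) := by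
        refine Finset.sum_congr rfl fun d _ => ?_
        rw [Finset.mul_sum]
        refine Finset.sum_congr rfl fun x _ => ?_
        rw [Finset.mul_sum]
        refine Finset.sum_congr rfl fun y _ => ?_
        have hc : (0:ℝ) < π e * demoW μ k e d * μ x :=
          mul_pos (mul_pos (hπ e) (demoW_pos hμ hk e d)) (hμ x)
        have hsum : ∑ y', π e * demoW μ k e d * μ x * k e x y'
            = π e * demoW μ k e d * μ x := by
          rw [← Finset.mul_sum, hksum, mul_one]
        rw [hsum, mul_div_cancel_left₀ _ hc.ne']
        ring
    _ = ∑ x, ∑ y, π e * μ x * (k e x y * Real.log (k e x y)) := by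
        rw [← Finset.sum_mul, demoW_sum_one μ k hμsum hksum e t, one_mul]

lemma epsBayes_eq {E X Y : Type*} [Fintype E] [Fintype X] [Fintype Y]
    [Nonempty E] [Nonempty Y]
    (π : E → ℝ) (μ : X → ℝ) (k : E → X → Y → ℝ)
    (hπ : ∀ e, 0 < π e) (hμ : ∀ x, 0 < μ x) (hk : ∀ e x y, 0 < k e x y)
    (hμsum : ∑ x, μ x = 1) (hksum : ∀ e x, ∑ y, k e x y = 1) (t : ℕ) :
    epsBayes π μ k t = CE (pmarg π μ k t) - Hstar π μ k := by
  unfold epsBayes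
  rw [condMI_eq (fun (e : E) (bc : (Fin t → X × Y) × X) (y : Y) =>
      π e * demoW μ k e bc.1 * μ bc.2 * k e bc.2 y) (fun e bc y =>
    mul_pos (mul_pos (mul_pos (hπ e) (demoW_pos hμ hk e bc.1)) (hμ bc.2)) (hk e bc.2 y))]
  rw [CEjoint_eq π μ k hπ hμ hk hμsum hksum t]
  rfl

def combineEquiv (X Y : Type*) (n u : ℕ) :
    ((Fin n → X × Y) × ((Fin u → X × Y) × X)) ≃ ((Fin (n + u) → X × Y) × X) where
  toFun ab := (fun j => Sum.elim ab.1 ab.2.1 (finSumFinEquiv.symm j), ab.2.2)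
  invFun bx := (fun i => bx.1 (finSumFinEquiv (Sum.inl i)),
    (fun i => bx.1 (finSumFinEquiv (Sum.inr i)), bx.2))
  left_inv := by
    rintro ⟨dt, d, x⟩
    simp
  right_inv := by
    rintro ⟨g, x⟩
    simp only [Prod.mk.injEq]
    refine ⟨funext fun j => ?_, trivial⟩
    rcases hj : finSumFinEquiv.symm j with i | i <;>
      · have : j = finSumFinEquiv (finSumFinEquiv.symm j) := (Equiv.apply_symm_apply _ _).symm
        rw [hj] at this
        simp [this]

lemma demoW_mul {E X Y : Type*} {n u : ℕ} [Fintype X] [Fintype Y]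
    (μ : X → ℝ) (k : E → X → Y → ℝ) (e : E)
    (dt : Fin n → X × Y) (d : Fin u → X × Y) :
    demoW μ k e (fun j => Sum.elim dt d (finSumFinEquiv.symm j))
      = demoW μ k e dt * demoW μ k e d := by
  unfold demoW
  calc (∏ j : Fin (n + u), μ ((Sum.elim dt d (finSumFinEquiv.symm j))).1 *
          k e ((Sum.elim dt d (finSumFinEquiv.symm j))).1 ((Sum.elim dt d (finSumFinEquiv.symm j))).2)
      = ∏ i : Fin n ⊕ Fin u, μ ((Sum.elim dt d i)).1 *
          k e ((Sum.elim dt d i)).1 ((Sum.elim dt d i)).2 := by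
        rw [← Equiv.prod_comp finSumFinEquiv
          (fun j => μ ((Sum.elim dt d (finSumFinEquiv.symm j))).1 *
            k e ((Sum.elim dt d (finSumFinEquiv.symm j))).1 ((Sum.elim dt d (finSumFinEquiv.symm j))).2)]
        simp
    _ = _ := by rw [Fintype.prod_sum_type]; simp

lemma freshInfo_eq {E X Y : Type*} [Fintype E] [Fintype X] [Fintype Y]
    [Nonempty E] [Nonempty X] [Nonempty Y]
    (π : E → ℝ) (μ : X → ℝ) (k : E → X → Y → ℝ)
    (hπ : ∀ e, 0 < π e) (hμ : ∀ x, 0 < μ x) (hk : ∀ e x y, 0 < k e x y)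
    (hμsum : ∑ x, μ x = 1) (hksum : ∀ e x, ∑ y, k e x y = 1) (u n : ℕ) :
    freshInfo π μ k u n = CE (pmarg π μ k u) - CE (pmarg π μ k (n + u)) := by
  unfold freshInfo
  rw [condMI_eq (fun (dt : Fin n → X × Y) (bc : (Fin u → X × Y) × X) (y : Y) =>
      ∑ e, π e * demoW μ k e bc.1 * μ bc.2 * k e bc.2 y * demoW μ k e dt)
    (fun dt bc y => Finset.sum_pos (fun e _ =>
      mul_pos (mul_pos (mul_pos (mul_pos (hπ e) (demoW_pos hμ hk e bc.1)) (hμ bc.2))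
        (hk e bc.2 y)) (demoW_pos hμ hk e dt)) univ_nonempty)]
  congr 1
  · -- marginal over the fresh batch
    have : (fun (bc : (Fin u → X × Y) × X) (y : Y) =>
        ∑ dt : Fin n → X × Y, ∑ e, π e * demoW μ k e bc.1 * μ bc.2 * k e bc.2 y * demoW μ k e dt)
        = pmarg π μ k u := by
      funext bc y
      rw [Finset.sum_comm]
      refine Finset.sum_congr rfl fun e _ => ?_
      rw [← Finset.mul_sum, demoW_sum_one μ k hμsum hksum e n, mul_one]
    rw [this]
  · -- joint with the fresh batch equals the `n + u` joint, via reindexing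
    have : (fun (ab : (Fin n → X × Y) × ((Fin u → X × Y) × X)) (y : Y) =>
        ∑ e, π e * demoW μ k e ab.2.1 * μ ab.2.2 * k e ab.2.2 y * demoW μ k e ab.1)
        = fun ab y => pmarg π μ k (n + u) (combineEquiv X Y n u ab) y := by
      funext ab y
      unfold pmarg combineEquiv
      refine Finset.sum_congr rfl fun e _ => ?_
      simp only [Equiv.coe_fn_mk]
      rw [demoW_mul]
      ring
    rw [this, CE_reindex (combineEquiv X Y n u) (pmarg π μ k (n + u))]

/-- For `u ≤ v`, the reduction in Bayes risk equals the conditional mutual information between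
the test output and a fresh batch of `v − u` demonstrations:
`ε_Bayes^u − ε_Bayes^v = I(Y_{u+1}; D̃_{v−u} | X_{u+1}, D_u)`.  In this generative model the
pairs `(Xᵢ, Yᵢ)` are i.i.d. (hence exchangeable) given `e`, and `Y_{n+1}` is conditionally
independent of `D_n` given `(X_{n+1}, e)`. -/
theorem bayes_risk_reduction_eq_condMutualInfo
    {E X Y : Type*} [Fintype E] [Fintype X] [Fintype Y]
    (π : E → ℝ) (μ : X → ℝ) (k : E → X → Y → ℝ)
    (hπ : ∀ e, 0 < π e) (hπsum : ∑ e, π e = 1)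
    (hμ : ∀ x, 0 < μ x) (hμsum : ∑ x, μ x = 1)
    (hk : ∀ e x y, 0 < k e x y) (hksum : ∀ e x, ∑ y, k e x y = 1)
    (u v : ℕ) (huv : u ≤ v) :
    epsBayes π μ k u - epsBayes π μ k v = freshInfo π μ k u (v - u) := by
  have hE : Nonempty E := by
    rcases isEmpty_or_nonempty E with h | h
    · rw [Finset.univ_eq_empty, Finset.sum_empty] at hπsum; norm_num at hπsum
    · exact h
  have hX : Nonempty X := by
    rcases isEmpty_or_nonempty X with h | h
    · rw [Finset.univ_eq_empty, Finset.sum_empty] at hμsum; norm_num at hμsum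
    · exact h
  have hY : Nonempty Y := by
    rcases isEmpty_or_nonempty Y with h | h
    · have := hksum (Classical.arbitrary E) (Classical.arbitrary X)
      rw [Finset.univ_eq_empty, Finset.sum_empty] at this; norm_num at this
    · exact h
  obtain ⟨n, rfl⟩ : ∃ n, v = n + u := ⟨v - u, (Nat.sub_add_cancel huv).symm⟩
  simp only [Nat.add_sub_cancel]
  rw [epsBayes_eq π μ k hπ hμ hk hμsum hksum u,
    epsBayes_eq π μ k hπ hμ hk hμsum hksum (n + u),
    freshInfo_eq π μ k hπ hμ hk hμsum hksum u n]
  ring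
end

section
/- (Theorem 1, suboptimality lower bound) Assume: (i) ε_Bayes is non-increasing in t; (ii) ε_XS^t ≥ 0 for all t; (iii) there exist t̄ ∈ ℕ and Δ_XS ≥ 0 with ε_XS^{t'} ≥ Δ_XS for all t' ≥ t̄; (iv) for u ≤ v, ε_Bayes^u − ε_Bayes^v = I(Y_{u+1}; D̃_{v−u} | H_u), where I(q, t) := I(Y_{N(q)}; D̃_{t+1} | H_{N(q)−1}) is non-decreasing in t. Let N(q) := min{t : ε_Bayes^t ≤ q} and SubOpt(q) := min{t − N(q) : ε_Bayes^t + ε_XS^t ≤ q}. Then for any q with N(q) ≥ t̄ (and q < ε_Bayes^{N(q)−1}), SubOpt(q) ≥ min{t ∈ ℕ : I(Y_{N(q)}; D̃_{t+1} | H_{N(q)−1}) > Δ_XS}. -/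
/-- **Theorem 1 (suboptimality lower bound).**
Abstract real-sequence formalization: `a t = ε_Bayes^t` (non-increasing Bayes risk),
`b t = ε_XS^t` (nonnegative excess risk, bounded below by `Δ` after `tbar`), and
`M u k = I(Y_{u+1}; D̃_k | H_u)` the conditional-mutual-information gains, satisfying the
telescoping identity `a u − a v = M u (v − u)` for `u ≤ v` and non-decreasing in the number
of fresh demonstrations at `u = N(q) − 1`.  `N` is the Bayes-optimal sample complexity
`min {t | a t ≤ q}`, `S = min {t | a t + b t ≤ q}` the ICL sample complexity (so
`SubOpt(q) = S − N`), and `L = min {t | M (N−1) (t+1) > Δ}`.  If `N ≥ tbar` (and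
`q < a (N−1)`), then `SubOpt(q) ≥ L`, i.e. `L + N ≤ S`. -/
theorem suboptimality_lower_bound
    (a b : ℕ → ℝ) (M : ℕ → ℕ → ℝ) (tbar N S L : ℕ) (Δ q : ℝ)
    (ha : Antitone a)
    (hb : ∀ t, 0 ≤ b t)
    (hΔ : 0 ≤ Δ)
    (hbΔ : ∀ t, tbar ≤ t → Δ ≤ b t)
    (hM : ∀ u v, u ≤ v → a u - a v = M u (v - u))
    (hMmono : Monotone (M (N - 1)))
    (hN : IsLeast {t | a t ≤ q} N)
    (htbar : tbar ≤ N)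
    (hN1 : 1 ≤ N)
    (hq : q < a (N - 1))
    (hS : IsLeast {t | a t + b t ≤ q} S)
    (hL : IsLeast {t | Δ < M (N - 1) (t + 1)} L) :
    L + N ≤ S := by
  have hNS : N ≤ S := hN.2 (by have := hS.1; have := hb S; simp only [Set.mem_setOf_eq] at *; linarith)
  have hbS : Δ ≤ b S := hbΔ S (le_trans htbar hNS)
  have hkey : Δ < M (N - 1) (S - (N - 1)) := by
    rw [← hM (N - 1) S (by omega)]
    have := hS.1
    simp only [Set.mem_setOf_eq] at this
    linarith
  have heq : S - (N - 1) = (S - N) + 1 := by omega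
  rw [heq] at hkey
  have hLle : L ≤ S - N := hL.2 hkey
  omega
end

section
/- (Abstract real-sequence version of Theorem 1) Let a : ℕ → ℝ be non-increasing, b : ℕ → ℝ with b_t ≥ 0 for all t, and suppose there exist t̄ ∈ ℕ and Δ ≥ 0 such that b_t ≥ Δ for all t ≥ t̄. For q ∈ ℝ define N(q) = min{t : a_t ≤ q}, assumed to exist, with N(q) ≥ t̄ and q < a_{N(q)−1}. Then min{t : a_t + b_t ≤ q} − N(q) ≥ min{k ∈ ℕ : a_{N(q)−1} − a_{k + N(q)} > Δ}, provided both minima exist. -/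
/-- **Abstract real-sequence version of Theorem 1.**
Let `a : ℕ → ℝ` be non-increasing (the Bayes risk), `b : ℕ → ℝ` nonnegative (the excess
risk) with `b t ≥ Δ` for all `t ≥ tbar`.  For `q : ℝ`, let `N = min {t | a t ≤ q}`
(assumed to exist) with `N ≥ tbar` and `q < a (N − 1)`.  Then
`min {t | a t + b t ≤ q} − N ≥ min {k | a (N−1) − a (k + N) > Δ}`,
provided both minima exist; equivalently `L + N ≤ S`. -/
theorem suboptimality_lower_bound_sequences
    (a b : ℕ → ℝ) (tbar N S L : ℕ) (Δ q : ℝ)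
    (ha : Antitone a)
    (hb : ∀ t, 0 ≤ b t)
    (hΔ : 0 ≤ Δ)
    (hbΔ : ∀ t, tbar ≤ t → Δ ≤ b t)
    (hN : IsLeast {t | a t ≤ q} N)
    (htbar : tbar ≤ N)
    (hN1 : 1 ≤ N)
    (hq : q < a (N - 1))
    (hS : IsLeast {t | a t + b t ≤ q} S)
    (hL : IsLeast {k | Δ < a (N - 1) - a (k + N)} L) :
    L + N ≤ S := by
  have hSq : a S + b S ≤ q := hS.1
  have hbS := hb S
  have hNS : N ≤ S := hN.2 (by simp only [Set.mem_setOf_eq]; linarith)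
  have hΔS : Δ ≤ b S := hbΔ S (le_trans htbar hNS)
  have hk : Δ < a (N - 1) - a ((S - N) + N) := by
    rw [Nat.sub_add_cancel hNS]; linarith
  have := hL.2 hk
  omega
end
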